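/- Let (a_n)_{n≥0} be a sequence of integers with a_n ≥ 2 for all n, q₀ = 1, q_{n+1} = a_n·q_n, and let f be a real-valued Q-additive function. Then for every real t, every integer h ≥ 1 and every integer N ≥ q_h, with L = L(N) the length of the Cantor expansion of N, one has |φ_N(t) − φ_{q_{L+1}}(t)| ≤ 2/(a_{L−h+1}·a_{L−h+2}·⋯·a_{L−1}) + 2√2 · ∑_{j=L−h+1}^{L} max_{1≤d≤a_j−1} (1 − cos(t·f(d q_j)))^{1/2}, where φ_M(t) = (1/M) ∑_{n<M} e^{i t f(n)}. -/

import Mathlib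

open Filter Finset Topology

/-- `f : ℕ → ℝ` is `Q`-additive with respect to the Cantor numeration system. -/
def IsCantorAdditive (a : ℕ → ℕ) (Q : ℕ → ℕ) (f : ℕ → ℝ) : Prop :=
  ∀ n : ℕ, f n = ∑ j ∈ Finset.range n, f (n / Q j % a j * Q j)

/-- Empirical characteristic function `φ_M(t) = (1/M) ∑_{n<M} e^{i t f(n)}`. -/
noncomputable def empCharFun (f : ℕ → ℝ) (M : ℕ) (t : ℝ) : ℂ :=
  (∑ n ∈ Finset.range M, Complex.exp (Complex.I * t * f n)) / M

/-!
Cut `[0, N)` into blocks of length `q_K`, `K = L - h + 1`, and write `e(n) = exp(i t f(n))`.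
Additivity gives `e(m q_K + r) = e(m q_K) e(r)` for `r < q_K`, so a full block sums to
`e(m q_K) · A` with `A = ∑_{r < q_K} e(r)`. For `m q_K < q_{L+1}` the factor `e(m q_K)` is a
product of the digit factors at positions `K, …, L`, each within
`√2 · max_d √(1 - cos (t f(d q_j)))` of `1`. Hence `φ_N` and `φ_{q_{L+1}}` both lie within
`√2 ∑_j max_d √(1 - cos (t f(d q_j)))` of the block average `A / q_K`, up to the incomplete last
block of `N`, which costs `2 q_K / N ≤ 2 / (a_K ⋯ a_{L-1})` since `N ≥ q_L = q_K a_K ⋯ a_{L-1}`.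
-/

open Complex in
theorem Complex.norm_exp_I_mul_ofReal_sub_one_eq_sqrt (x : ℝ) :
    ‖exp (I * x) - 1‖ = √2 * √(1 - Real.cos x) := by
  have hre : exp (I * x) - 1 = (Real.cos x - 1 : ℝ) + (Real.sin x : ℝ) * I := by
    rw [mul_comm, exp_mul_I]
    push_cast
    ring
  have hsq : (Real.cos x - 1) ^ 2 + Real.sin x ^ 2 = 2 * (1 - Real.cos x) := by
    linear_combination Real.sin_sq_add_cos_sq x
  rw [hre, norm_add_mul_I, hsq, Real.sqrt_mul zero_le_two]

theorem norm_prod_sub_one_le_sum {ι R : Type*} [SeminormedCommRing R] (s : Finset ι) (g : ι → R)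
    (hg : ∀ i ∈ s, ‖g i‖ ≤ 1) :
    ‖∏ i ∈ s, g i - 1‖ ≤ ∑ i ∈ s, ‖g i - 1‖ := by
  induction s using Finset.cons_induction with
  | empty => simp
  | cons i s hi ih =>
    rw [prod_cons, sum_cons]
    have ih' := ih fun j hj => hg j (mem_cons_of_mem hj)
    calc ‖g i * ∏ j ∈ s, g j - 1‖ = ‖g i * (∏ j ∈ s, g j - 1) + (g i - 1)‖ := by ring_nf
      _ ≤ ‖g i‖ * ‖∏ j ∈ s, g j - 1‖ + ‖g i - 1‖ := (norm_add_le _ _).trans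
          (add_le_add_left (norm_mul_le _ _) _)
      _ ≤ ‖g i - 1‖ + ∑ j ∈ s, ‖g j - 1‖ := by
          nlinarith [hg i (mem_cons_self i s), norm_nonneg (∏ j ∈ s, g j - 1)]

theorem sum_range_mul_eq_mul_of_block {R : Type*} [CommSemiring R] {e : ℕ → R} {q : ℕ}
    (hmul : ∀ m r, r < q → e (m * q + r) = e (m * q) * e r) (c : ℕ) :
    ∑ n ∈ range (c * q), e n = (∑ m ∈ range c, e (m * q)) * ∑ r ∈ range q, e r := by
  induction c with
  | zero => simp
  | succ c ih =>
    rw [Nat.succ_mul, sum_range_add, ih, sum_range_succ, add_mul, mul_sum _ _ (e (c * q))]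
    congr 1
    exact sum_congr rfl fun r hr => hmul c r (mem_range.1 hr)

theorem norm_sum_range_sub_le {𝕜 : Type*} [RCLike 𝕜] {e : ℕ → 𝕜} {q : ℕ} (he : ∀ n, ‖e n‖ ≤ 1)
    (hmul : ∀ m r, r < q → e (m * q + r) = e (m * q) * e r) (hq : 0 < q) {ε : ℝ} (hε0 : 0 ≤ ε)
    {N : ℕ} (hε : ∀ m < N / q, ‖e (m * q) - 1‖ ≤ ε) :
    ‖∑ n ∈ range N, e n - N * (∑ r ∈ range q, e r) / q‖ ≤ ε * N + 2 * (N % q : ℕ) := by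
  set M := N / q
  set R := N % q
  set A := ∑ r ∈ range q, e r
  have hN : N = M * q + R := (Nat.div_add_mod' N q).symm
  have hq' : (q : 𝕜) ≠ 0 := Nat.cast_ne_zero.2 hq.ne'
  have hdecomp : ∑ n ∈ range N, e n - N * A / q
      = (∑ m ∈ range M, (e (m * q) - 1)) * A + ∑ i ∈ range R, e (M * q + i) - R * A / q := by
    rw [hN, sum_range_add, sum_range_mul_eq_mul_of_block hmul, sum_sub_distrib]
    field_simp
    simp only [sum_const, card_range, nsmul_eq_mul, mul_one]
    push_cast
    ring
  have hA : ‖A‖ ≤ q :=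
    (norm_sum_le _ _).trans (by simpa using sum_le_sum (s := range q) fun r _ => he r)
  have hG : ‖∑ m ∈ range M, (e (m * q) - 1)‖ ≤ M * ε := by
    simpa using norm_sum_le_of_le _ fun m hm => hε m (mem_range.1 hm)
  have hT : ‖∑ i ∈ range R, e (M * q + i)‖ ≤ R := by
    simpa using norm_sum_le_of_le (range R) fun i _ => he (M * q + i)
  have hRA : ‖(R : 𝕜) * A / q‖ ≤ R := by
    rw [norm_div, norm_mul, RCLike.norm_natCast, RCLike.norm_natCast]
    exact div_le_of_le_mul₀ (Nat.cast_nonneg _) (Nat.cast_nonneg _) (by gcongr)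
  have hMq : (M : ℝ) * q ≤ N := by exact_mod_cast Nat.div_mul_le_self N q
  rw [hdecomp]
  calc _ ≤ ‖(∑ m ∈ range M, (e (m * q) - 1)) * A‖ + ‖∑ i ∈ range R, e (M * q + i)‖
        + ‖(R : 𝕜) * A / q‖ := norm_sub_le_of_le (norm_add_le _ _) le_rfl
    _ ≤ M * ε * q + R + R := by
        rw [norm_mul]
        gcongr
    _ ≤ ε * N + 2 * R := by nlinarith

theorem eq_mul_prod_Ico_of_succ {a Q : ℕ → ℕ} (hQ : ∀ n, Q (n + 1) = a n * Q n) {j k : ℕ}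
    (hjk : j ≤ k) : Q k = Q j * ∏ i ∈ Ico j k, a i := by
  induction k, hjk using Nat.le_induction with
  | base => simp
  | succ k hjk ih => rw [hQ, ih, prod_Ico_succ_top hjk]; ring

structure IsCantorSystem (a Q : ℕ → ℕ) : Prop where
  two_le : ∀ n, 2 ≤ a n
  Q_zero : Q 0 = 1
  Q_succ : ∀ n, Q (n + 1) = a n * Q n

namespace IsCantorSystem

variable {a Q : ℕ → ℕ} (hc : IsCantorSystem a Q)
include hc

theorem Q_pos (n : ℕ) : 0 < Q n := by
  induction n with
  | zero => simp [hc.Q_zero]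
  | succ n ih => rw [hc.Q_succ]; exact Nat.mul_pos (by linarith [hc.two_le n]) ih

theorem Q_dvd_Q {j k : ℕ} (hjk : j ≤ k) : Q j ∣ Q k :=
  Dvd.intro _ (eq_mul_prod_Ico_of_succ hc.Q_succ hjk).symm

theorem Q_monotone : Monotone Q :=
  monotone_nat_of_le_succ fun n => by
    rw [hc.Q_succ]; exact Nat.le_mul_of_pos_left _ (by linarith [hc.two_le n])

theorem lt_Q_self (n : ℕ) : n < Q n := by
  induction n with
  | zero => simp [hc.Q_zero]
  | succ n ih => rw [hc.Q_succ]; nlinarith [hc.two_le n]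

theorem digit_mul_add_of_lt {j k : ℕ} (hjk : j < k) (m r : ℕ) :
    (m * Q k + r) / Q j % a j = r / Q j % a j := by
  obtain ⟨c, hc'⟩ := hc.Q_dvd_Q hjk
  rw [hc', hc.Q_succ, show m * (a j * Q j * c) + r = r + m * c * a j * Q j by ring,
    Nat.add_mul_div_right _ _ (hc.Q_pos j), Nat.add_mul_mod_self_right]

theorem digit_mul_of_lt {j k : ℕ} (hjk : j < k) (m : ℕ) : m * Q k / Q j % a j = 0 := by
  simpa using hc.digit_mul_add_of_lt hjk m 0

theorem div_mul_add_of_le {j k : ℕ} (hkj : k ≤ j) (m : ℕ) {r : ℕ} (hr : r < Q k) :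
    (m * Q k + r) / Q j = m * Q k / Q j := by
  obtain ⟨c, hc'⟩ := hc.Q_dvd_Q hkj
  rw [hc', ← Nat.div_div_eq_div_mul, ← Nat.div_div_eq_div_mul, mul_comm m,
    Nat.mul_add_div (hc.Q_pos k), Nat.div_eq_of_lt hr, add_zero,
    Nat.mul_div_cancel_left _ (hc.Q_pos k)]

end IsCantorSystem

namespace IsCantorAdditive

variable {a Q : ℕ → ℕ} {f : ℕ → ℝ} (hf : IsCantorAdditive a Q f)
include hf

theorem map_zero : f 0 = 0 := by simpa using hf 0

theorem digitTerm_eq_zero {n j : ℕ} (hn : n < Q j) : f (n / Q j % a j * Q j) = 0 := by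
  rw [Nat.div_eq_of_lt hn, Nat.zero_mod, zero_mul, hf.map_zero]

theorem eq_sum_range (hc : IsCantorSystem a Q) {n M : ℕ} (hn : n < Q M) :
    f n = ∑ j ∈ range M, f (n / Q j % a j * Q j) := by
  have htail : ∀ {M}, n < Q M → ∀ j ∉ range M, f (n / Q j % a j * Q j) = 0 := fun hM j hj =>
    hf.digitTerm_eq_zero (hM.trans_le (hc.Q_monotone (by simpa using hj)))
  rw [hf n,
    sum_subset (range_subset_range.2 (le_max_left n M)) fun j _ => htail (hc.lt_Q_self n) j,
    ← sum_subset (range_subset_range.2 (le_max_right n M)) fun j _ => htail hn j]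

theorem digitTerm_mul_add (hc : IsCantorSystem a Q) (j m : ℕ) {k r : ℕ} (hr : r < Q k) :
    f ((m * Q k + r) / Q j % a j * Q j)
      = f (m * Q k / Q j % a j * Q j) + f (r / Q j % a j * Q j) := by
  rcases lt_or_ge j k with hjk | hkj
  · rw [hc.digit_mul_add_of_lt hjk, hc.digit_mul_of_lt hjk, zero_mul, hf.map_zero, zero_add]
  · rw [hc.div_mul_add_of_le hkj m hr, hf.digitTerm_eq_zero (hr.trans_le (hc.Q_monotone hkj)),
      add_zero]

theorem map_mul_add (hc : IsCantorSystem a Q) (m : ℕ) {k r : ℕ} (hr : r < Q k) :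
    f (m * Q k + r) = f (m * Q k) + f r := by
  set M := m * Q k + r
  have hM : M < Q M := hc.lt_Q_self M
  rw [hf.eq_sum_range hc hM, hf.eq_sum_range hc (n := m * Q k) (M := M) (by omega),
    hf.eq_sum_range hc (n := r) (M := M) (by omega), ← sum_add_distrib]
  exact sum_congr rfl fun j _ => hf.digitTerm_mul_add hc j m hr

theorem map_mul_eq_sum_Ico (hc : IsCantorSystem a Q) {k M m : ℕ} (hkM : k ≤ M)
    (hm : m * Q k < Q M) :
    f (m * Q k) = ∑ j ∈ Ico k M, f (m * Q k / Q j % a j * Q j) := by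
  rw [hf.eq_sum_range hc hm, ← sum_range_add_sum_Ico _ hkM, add_eq_right]
  refine sum_eq_zero fun j hj => ?_
  rw [hc.digit_mul_of_lt (mem_range.1 hj), zero_mul, hf.map_zero]

end IsCantorAdditive

noncomputable def maxDigitDefect {a Q : ℕ → ℕ} (hc : IsCantorSystem a Q) (f : ℕ → ℝ) (t : ℝ)
    (j : ℕ) : ℝ :=
  (Ico 1 (a j)).sup' (nonempty_Ico.2 (hc.two_le j)) fun d => √(1 - Real.cos (t * f (d * Q j)))

theorem maxDigitDefect_nonneg {a Q : ℕ → ℕ} (hc : IsCantorSystem a Q) (f : ℕ → ℝ) (t : ℝ)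
    (j : ℕ) : 0 ≤ maxDigitDefect hc f t j :=
  (Real.sqrt_nonneg _).trans
    (le_sup' (fun d => √(1 - Real.cos (t * f (d * Q j)))) (mem_Ico.2 ⟨le_rfl, hc.two_le j⟩))

theorem two_mul_mod_div_le_two_div_prod {a Q : ℕ → ℕ} (hc : IsCantorSystem a Q) {K L N : ℕ}
    (hKL : K ≤ L) (hLN : Q L ≤ N) :
    2 * ((N % Q K : ℕ) : ℝ) / N ≤ 2 / ∏ j ∈ Ico K L, (a j : ℝ) := by
  have hprod : 0 < ∏ j ∈ Ico K L, (a j : ℝ) :=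
    prod_pos fun j _ => by exact_mod_cast (hc.two_le j).trans_lt' two_pos
  have hQL : (Q L : ℝ) = Q K * ∏ j ∈ Ico K L, (a j : ℝ) := by
    exact_mod_cast eq_mul_prod_Ico_of_succ hc.Q_succ hKL
  have hR : ((N % Q K : ℕ) : ℝ) ≤ Q K := by exact_mod_cast (Nat.mod_lt N (hc.Q_pos K)).le
  have hN : (Q L : ℝ) ≤ N := by exact_mod_cast hLN
  rw [div_le_div_iff₀ (by exact_mod_cast (hc.Q_pos L).trans_le hLN) hprod]
  nlinarith

section DifferenceLemma

variable {a Q : ℕ → ℕ} (hc : IsCantorSystem a Q) {f : ℕ → ℝ} (hf : IsCantorAdditive a Q f)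
  (t : ℝ)
include hc hf

theorem sqrt_one_sub_cos_le_maxDigitDefect {j d : ℕ} (hd : d < a j) :
    √(1 - Real.cos (t * f (d * Q j))) ≤ maxDigitDefect hc f t j := by
  rcases Nat.eq_zero_or_pos d with rfl | hd0
  · rw [zero_mul, hf.map_zero, mul_zero, Real.cos_zero, sub_self, Real.sqrt_zero]
    exact maxDigitDefect_nonneg hc f t j
  · exact le_sup' (fun d => √(1 - Real.cos (t * f (d * Q j)))) (mem_Ico.2 ⟨hd0, hd⟩)

theorem norm_exp_mul_Q_sub_one_le {K L m : ℕ} (hK : K ≤ L + 1) (hm : m * Q K < Q (L + 1)) :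
    ‖Complex.exp (Complex.I * t * f (m * Q K)) - 1‖
      ≤ √2 * ∑ j ∈ Icc K L, maxDigitDefect hc f t j := by
  rw [hf.map_mul_eq_sum_Ico hc hK hm, mul_assoc, ← Complex.ofReal_mul, mul_sum,
    Complex.ofReal_sum, mul_sum, Complex.exp_sum, ← Ico_add_one_right_eq_Icc, mul_sum]
  refine (norm_prod_sub_one_le_sum _ _ fun j _ => ?_).trans (sum_le_sum fun j _ => ?_)
  · rw [Complex.norm_exp_I_mul_ofReal]
  · rw [Complex.norm_exp_I_mul_ofReal_sub_one_eq_sqrt]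
    exact mul_le_mul_of_nonneg_left
      (sqrt_one_sub_cos_le_maxDigitDefect hc hf t (Nat.mod_lt _ (by linarith [hc.two_le j])))
      (Real.sqrt_nonneg 2)

theorem norm_empCharFun_sub_le {K L N : ℕ} (hK : K ≤ L + 1) (hN0 : 0 < N) (hN : N ≤ Q (L + 1)) :
    ‖empCharFun f N t - (∑ r ∈ range (Q K), Complex.exp (Complex.I * t * f r)) / Q K‖
      ≤ √2 * ∑ j ∈ Icc K L, maxDigitDefect hc f t j + 2 * (N % Q K : ℕ) / N := by
  have hblock := norm_sum_range_sub_le (e := fun n => Complex.exp (Complex.I * t * f n))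
    (fun n => by rw [mul_assoc, ← Complex.ofReal_mul, Complex.norm_exp_I_mul_ofReal])
    (fun m r hr => by rw [hf.map_mul_add hc m hr, Complex.ofReal_add, mul_add, Complex.exp_add])
    (hc.Q_pos K)
    (mul_nonneg (Real.sqrt_nonneg 2) (sum_nonneg fun j _ => maxDigitDefect_nonneg hc f t j))
    (N := N) fun m hm => norm_exp_mul_Q_sub_one_le hc hf t hK
      ((Nat.mul_lt_mul_of_pos_right hm (hc.Q_pos K)).trans_le
        ((Nat.div_mul_le_self N (Q K)).trans hN))
  have hN0' : (0 : ℝ) < N := by exact_mod_cast hN0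
  have hsplit : empCharFun f N t - (∑ r ∈ range (Q K), Complex.exp (Complex.I * t * f r)) / Q K
      = (∑ n ∈ range N, Complex.exp (Complex.I * t * f n)
        - N * (∑ r ∈ range (Q K), Complex.exp (Complex.I * t * f r)) / Q K) / N := by
    rw [empCharFun, sub_div, mul_div_assoc, mul_div_cancel_left₀ _ (by exact_mod_cast hN0.ne')]
  rw [hsplit, norm_div, Complex.norm_natCast, div_le_iff₀ hN0', add_mul,
    div_mul_cancel₀ _ hN0'.ne']
  simpa using hblock

end DifferenceLemma

/-- **Difference lemma for Cantor numeration systems.** For all `h ≥ 1` and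
`N ≥ q_h`, with `L = L(N)` the length of the Cantor expansion of `N`
(`q_L ≤ N < q_{L+1}`):
`|φ_N(t) − φ_{q_{L+1}}(t)| ≤ 2/(a_{L−h+1}⋯a_{L−1}) + 2√2 ∑_{j=L−h+1}^{L} max_{1≤d≤a_j−1} √(1 − cos(t f(d q_j)))`. -/
theorem cantor_difference_lemma (a : ℕ → ℕ) (ha : ∀ n, 2 ≤ a n)
    (Q : ℕ → ℕ) (hQ0 : Q 0 = 1) (hQ : ∀ n, Q (n + 1) = a n * Q n)
    (f : ℕ → ℝ) (hf : IsCantorAdditive a Q f)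
    (t : ℝ) (h : ℕ) (hh : 1 ≤ h) (N : ℕ) (hN : Q h ≤ N)
    (L : ℕ) (hL1 : Q L ≤ N) (hL2 : N < Q (L + 1)) :
    ‖empCharFun f N t - empCharFun f (Q (L + 1)) t‖ ≤
      2 / (∏ j ∈ Finset.Ico (L - h + 1) L, (a j : ℝ)) +
        2 * Real.sqrt 2 * ∑ j ∈ Finset.Icc (L - h + 1) L,
          (Finset.Ico 1 (a j)).sup'
            (Finset.nonempty_Ico.mpr (by have := ha j; omega))
            (fun d => Real.sqrt (1 - Real.cos (t * f (d * Q j)))) := by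
  have hc : IsCantorSystem a Q := ⟨ha, hQ0, hQ⟩
  have hhL : h ≤ L := by
    by_contra! hLh
    exact absurd (hN.trans_lt hL2) (not_lt.2 (hc.Q_monotone hLh))
  set K := L - h + 1
  have hN0 : 0 < N := (hc.Q_pos L).trans_le hL1
  have hN_block := norm_empCharFun_sub_le hc hf t (K := K) (by omega) hN0 hL2.le
  have hQ_block := norm_empCharFun_sub_le hc hf t (K := K) (by omega) (hc.Q_pos (L + 1)) le_rfl
  rw [Nat.mod_eq_zero_of_dvd (hc.Q_dvd_Q (by omega))] at hQ_block
  have hrem := two_mul_mod_div_le_two_div_prod hc (K := K) (by omega) hL1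
  have htri := dist_triangle_right (empCharFun f N t) (empCharFun f (Q (L + 1)) t)
    ((∑ r ∈ range (Q K), Complex.exp (Complex.I * t * f r)) / Q K)
  simp only [dist_eq_norm, Nat.cast_zero, mul_zero, zero_div, add_zero] at htri hQ_block
  change _ ≤ _ + 2 * √2 * ∑ j ∈ Icc K L, maxDigitDefect hc f t j
  linarith
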